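/- arXiv:2405.04835 — 2 statements merged into one kernel-verified Lean document; each statement's English description precedes it below -/
import Mathlib

section
/- If a slowly varying function L₁ satisfies L₁(λx)/L₁(x) = 1 + Γ₁(λ,x) with Γ₁(λ,x) = o(L₁(x)/x^ν) as x → ∞ for every λ > 1 (with ν > 0 fixed), then there exists a positive constant C₁ such that L₁(x) = C₁ + o(x^{-ν}) as x → ∞. -/
open MeasureTheory Filter Asymptotics Set Real

noncomputable section

lemma aux_rpow_pow {lam : ℝ} (hlam : 0 ≤ lam) (ν : ℝ) (k : ℕ) :
    ((lam ^ k : ℝ)) ^ ν = (lam ^ ν) ^ k := by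
  rw [← Real.rpow_natCast lam k, ← Real.rpow_natCast (lam ^ ν) k,
    ← Real.rpow_mul hlam, ← Real.rpow_mul hlam, mul_comm]

lemma aux_step {L : ℝ → ℝ} {ν : ℝ} (hpos : ∀ x > (0:ℝ), 0 < L x) {lam : ℝ}
    (hten : Tendsto (fun x => x ^ ν * (L (lam * x) / L x - 1) / L x) atTop (nhds 0))
    {ε : ℝ} (hε : 0 < ε) :
    ∃ X : ℝ, 1 ≤ X ∧ ∀ x, X ≤ x → |L (lam * x) - L x| ≤ ε * (L x) ^ 2 * x ^ (-ν) := by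
  obtain ⟨N, hN⟩ := (Metric.tendsto_atTop.mp hten) ε hε
  refine ⟨max N 1, le_max_right _ _, fun x hx => ?_⟩
  have hx1 : (1:ℝ) ≤ x := le_trans (le_max_right N 1) hx
  have hx0 : (0:ℝ) < x := lt_of_lt_of_le one_pos hx1
  have hLx : 0 < L x := hpos x hx0
  have hxν : 0 < x ^ ν := Real.rpow_pos_of_pos hx0 ν
  have hb := (hN x (le_trans (le_max_left N 1) hx)).le
  rw [Real.dist_eq, sub_zero] at hb
  set d := L (lam * x) / L x - 1 with hd
  have h2 : |x ^ ν * d / L x| = x ^ ν * |d| / L x := by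
    rw [abs_div, abs_mul, abs_of_pos hxν, abs_of_pos hLx]
  rw [h2, div_le_iff₀ hLx] at hb
  have h1 : L x * d = L (lam * x) - L x := by
    rw [hd]; field_simp
  have h3 : |L (lam * x) - L x| = L x * |d| := by
    rw [← h1, abs_mul, abs_of_pos hLx]
  rw [h3, Real.rpow_neg hx0.le]
  have hxνinv : 0 < (x ^ ν)⁻¹ := inv_pos.mpr hxν
  have key : L x * (x ^ ν * |d|) * (x ^ ν)⁻¹ ≤ L x * (ε * L x) * (x ^ ν)⁻¹ := by
    apply mul_le_mul_of_nonneg_right _ hxνinv.le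
    exact mul_le_mul_of_nonneg_left hb hLx.le
  have hc : x ^ ν * (x ^ ν)⁻¹ = 1 := mul_inv_cancel₀ hxν.ne'
  calc L x * |d| = L x * (x ^ ν * |d|) * (x ^ ν)⁻¹ := by
        field_simp
    _ ≤ L x * (ε * L x) * (x ^ ν)⁻¹ := key
    _ = ε * L x ^ 2 * (x ^ ν)⁻¹ := by ring

lemma aux_orbit (L : ℝ → ℝ) (ν lam X₁ : ℝ) (hν : 0 < ν) (hlam1 : 1 < lam)
    (hX₁ : 1 ≤ X₁) (hpos : ∀ x > (0:ℝ), 0 < L x)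
    (hub : ∀ y, X₁ ≤ y → L (lam * y) ≤ 2 * L y)
    (hlam5 : (5:ℝ) ≤ lam ^ ν) :
    ∀ x, X₁ ≤ x → ∀ k : ℕ,
      L (lam ^ k * x) ≤ 2 ^ k * L x ∧
      (L (lam ^ k * x)) ^ 2 * (lam ^ k * x) ^ (-ν) ≤ (L x) ^ 2 * x ^ (-ν) * (4/5) ^ k := by
  intro x hx
  have hlam0 : (0:ℝ) < lam := lt_trans one_pos hlam1
  have hx0 : (0:ℝ) < x := lt_of_lt_of_le one_pos (le_trans hX₁ hx)
  have horb : ∀ k : ℕ, x ≤ lam ^ k * x := fun k =>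
    le_mul_of_one_le_left hx0.le (one_le_pow₀ hlam1.le)
  have hgrow : ∀ k : ℕ, L (lam ^ k * x) ≤ 2 ^ k * L x := by
    intro k
    induction k with
    | zero => simp
    | succ k ih =>
      have h1 := hub (lam ^ k * x) (le_trans hx (horb k))
      have h2 : lam ^ (k+1) * x = lam * (lam ^ k * x) := by ring
      rw [h2]
      calc L (lam * (lam ^ k * x)) ≤ 2 * L (lam ^ k * x) := h1
        _ ≤ 2 * (2 ^ k * L x) := by linarith
        _ = 2 ^ (k+1) * L x := by ring
  intro k
  refine ⟨hgrow k, ?_⟩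
  have hy0 : (0:ℝ) < lam ^ k * x := lt_of_lt_of_le hx0 (horb k)
  have hLy := hpos _ hy0
  have h1 : (L (lam ^ k * x)) ^ 2 ≤ 4 ^ k * (L x) ^ 2 := by
    have := hgrow k
    have h4 : ((2:ℝ) ^ k) ^ 2 = 4 ^ k := by
      rw [← pow_mul, mul_comm, pow_mul]; norm_num
    nlinarith [hLy.le, pow_pos (show (0:ℝ) < 2 by norm_num) k, (hpos x hx0).le]
  have h2 : (lam ^ k * x) ^ (-ν) = ((lam ^ ν) ^ k)⁻¹ * x ^ (-ν) := by
    rw [Real.mul_rpow (pow_nonneg hlam0.le k) hx0.le, Real.rpow_neg (pow_nonneg hlam0.le k),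
      aux_rpow_pow hlam0.le]
  have h3 : ((lam ^ ν) ^ k)⁻¹ ≤ ((5:ℝ) ^ k)⁻¹ := by
    apply inv_anti₀ (pow_pos (by norm_num) k)
    exact pow_le_pow_left₀ (by norm_num) hlam5 k
  have hxν : (0:ℝ) ≤ x ^ (-ν) := Real.rpow_nonneg hx0.le _
  calc (L (lam ^ k * x)) ^ 2 * (lam ^ k * x) ^ (-ν)
      = (L (lam ^ k * x)) ^ 2 * (((lam ^ ν) ^ k)⁻¹ * x ^ (-ν)) := by rw [h2]
    _ ≤ (4 ^ k * (L x) ^ 2) * (((5:ℝ) ^ k)⁻¹ * x ^ (-ν)) := by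
        apply mul_le_mul h1 (mul_le_mul_of_nonneg_right h3 hxν) (by positivity) (by positivity)
    _ = (L x) ^ 2 * x ^ (-ν) * (4/5) ^ k := by
        rw [div_pow]; ring



def SlowlyVarying (L : ℝ → ℝ) : Prop :=
  ∀ lam : ℝ, 0 < lam → Filter.Tendsto (fun x => L (lam * x) / L x) Filter.atTop (nhds 1)

theorem stmt2 (L₁ : ℝ → ℝ) (hpos : ∀ x > (0:ℝ), 0 < L₁ x) (hslow : SlowlyVarying L₁)
    (ν : ℝ) (hν : 0 < ν)
    (h : ∀ lam : ℝ, 1 < lam →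
      Tendsto (fun x => x ^ ν * (L₁ (lam * x) / L₁ x - 1) / L₁ x) atTop (nhds 0)) :
    ∃ C₁ : ℝ, 0 < C₁ ∧ (fun x => L₁ x - C₁) =o[atTop] fun x => x ^ (-ν) := by
  classical
  set lam : ℝ := max 2 ((5:ℝ) ^ (ν⁻¹)) with hlam_def
  have hlam1 : (1:ℝ) < lam := lt_of_lt_of_le one_lt_two (le_max_left _ _)
  have hlam0 : (0:ℝ) < lam := lt_trans one_pos hlam1
  have hlam5 : (5:ℝ) ≤ lam ^ ν := by
    have h5 : (((5:ℝ)) ^ (ν⁻¹)) ^ ν = 5 := Real.rpow_inv_rpow (by norm_num) hν.ne'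
    calc (5:ℝ) = (((5:ℝ)) ^ (ν⁻¹)) ^ ν := h5.symm
      _ ≤ lam ^ ν := Real.rpow_le_rpow (Real.rpow_nonneg (by norm_num) _)
          (le_max_right _ _) hν.le
  -- ratio bounds from slow variation
  obtain ⟨N₁, hN₁⟩ := Metric.tendsto_atTop.mp (hslow lam hlam0) (1/2) (by norm_num)
  set X₁ : ℝ := max N₁ 1 with hX₁_def
  have hX₁1 : (1:ℝ) ≤ X₁ := le_max_right _ _
  have hratio : ∀ y, X₁ ≤ y → L₁ (lam * y) ≤ 2 * L₁ y ∧ L₁ y ≤ 2 * L₁ (lam * y) := by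
    intro y hy
    have hy1 : (1:ℝ) ≤ y := le_trans hX₁1 hy
    have hy0 : (0:ℝ) < y := lt_of_lt_of_le one_pos hy1
    have hLy : 0 < L₁ y := hpos y hy0
    have hb := hN₁ y (le_trans (le_max_left _ _) hy)
    rw [Real.dist_eq] at hb
    have hb' := abs_lt.mp hb
    have hr1 : L₁ (lam * y) / L₁ y ≤ 2 := by linarith [hb'.2]
    have hr2 : (1/2 : ℝ) ≤ L₁ (lam * y) / L₁ y := by linarith [hb'.1]
    rw [div_le_iff₀ hLy] at hr1
    rw [le_div_iff₀ hLy] at hr2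
    constructor <;> linarith
  have hub : ∀ y, X₁ ≤ y → L₁ (lam * y) ≤ 2 * L₁ y := fun y hy => (hratio y hy).1
  -- step bounds
  have hstep : ∀ ε : ℝ, 0 < ε → ∃ X : ℝ, X₁ ≤ X ∧
      ∀ x, X ≤ x → |L₁ (lam * x) - L₁ x| ≤ ε * (L₁ x) ^ 2 * x ^ (-ν) := by
    intro ε hε
    obtain ⟨X, _, hX⟩ := aux_step hpos (h lam hlam1) hε
    exact ⟨max X X₁, le_max_right _ _, fun x hx => hX x (le_trans (le_max_left _ _) hx)⟩
  obtain ⟨X₀, hX₀X₁, hstep1⟩ := hstep 1 one_pos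
  have hX₀1 : (1:ℝ) ≤ X₀ := le_trans hX₁1 hX₀X₁
  -- orbit facts
  have horbit := aux_orbit L₁ ν lam X₁ hν hlam1 hX₁1 hpos hub hlam5
  have horbge : ∀ x : ℝ, 0 < x → ∀ k : ℕ, x ≤ lam ^ k * x := fun x hx0 k =>
    le_mul_of_one_le_left hx0.le (one_le_pow₀ hlam1.le)
  -- difference bound along orbit
  have hdiff : ∀ ε X : ℝ, 0 ≤ ε → X₁ ≤ X →
      (∀ y, X ≤ y → |L₁ (lam * y) - L₁ y| ≤ ε * (L₁ y) ^ 2 * y ^ (-ν)) →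
      ∀ x, X ≤ x → ∀ k : ℕ,
        |L₁ (lam ^ (k+1) * x) - L₁ (lam ^ k * x)| ≤ ε * (L₁ x) ^ 2 * x ^ (-ν) * (4/5) ^ k := by
    intro ε X hε hXX₁ hX x hx k
    have hx0 : (0:ℝ) < x := lt_of_lt_of_le one_pos (le_trans hX₁1 (le_trans hXX₁ hx))
    have hy : X ≤ lam ^ k * x := le_trans hx (horbge x hx0 k)
    have h2 : lam ^ (k+1) * x = lam * (lam ^ k * x) := by ring
    rw [h2]
    calc |L₁ (lam * (lam ^ k * x)) - L₁ (lam ^ k * x)|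
        ≤ ε * (L₁ (lam ^ k * x)) ^ 2 * (lam ^ k * x) ^ (-ν) := hX _ hy
      _ ≤ ε * ((L₁ x) ^ 2 * x ^ (-ν) * (4/5) ^ k) := by
          rw [mul_assoc]
          exact mul_le_mul_of_nonneg_left
            ((horbit x (le_trans hXX₁ hx) k).2) hε
      _ = ε * (L₁ x) ^ 2 * x ^ (-ν) * (4/5) ^ k := by ring
  -- Cauchy, limits
  have hcauchy : ∀ x, X₀ ≤ x → ∃ a : ℝ,
      Tendsto (fun k : ℕ => L₁ (lam ^ k * x)) atTop (nhds a) := by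
    intro x hx
    have hc : CauchySeq (fun k : ℕ => L₁ (lam ^ k * x)) := by
      apply cauchySeq_of_le_geometric (4/5) ((L₁ x) ^ 2 * x ^ (-ν)) (by norm_num)
      intro n
      rw [Real.dist_eq, abs_sub_comm]
      have := hdiff 1 X₀ zero_le_one hX₀X₁ hstep1 x hx n
      simpa using this
    exact cauchySeq_tendsto_of_complete hc
  obtain ⟨C₁, hC₁lim⟩ := hcauchy X₀ le_rfl
  -- all orbits converge to the same limit
  have hX₀0 : (0:ℝ) < X₀ := lt_of_lt_of_le one_pos hX₀1
  have hlim : ∀ x, X₀ ≤ x → Tendsto (fun k : ℕ => L₁ (lam ^ k * x)) atTop (nhds C₁) := by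
    intro x hx
    rcases eq_or_lt_of_le hx with hxe | hxl
    · rw [← hxe]; exact hC₁lim
    · have hμ : 1 < x / X₀ := (one_lt_div hX₀0).mpr hxl
      obtain ⟨Xμ, _, hXμ⟩ := aux_step hpos (h (x / X₀) hμ) one_pos
      have hμx : ∀ k : ℕ, lam ^ k * x = (x / X₀) * (lam ^ k * X₀) := by
        intro k; field_simp
      have htd : Tendsto (fun k : ℕ => lam ^ k * X₀) atTop atTop :=
        Tendsto.atTop_mul_const hX₀0 (tendsto_pow_atTop_atTop_of_one_lt hlam1)
      have hev : ∀ᶠ k : ℕ in atTop,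
          ‖L₁ (lam ^ k * x) - L₁ (lam ^ k * X₀)‖ ≤ (L₁ X₀) ^ 2 * X₀ ^ (-ν) * (4/5) ^ k := by
        filter_upwards [htd.eventually_ge_atTop Xμ] with k hk
        rw [Real.norm_eq_abs, hμx k]
        calc |L₁ ((x / X₀) * (lam ^ k * X₀)) - L₁ (lam ^ k * X₀)|
            ≤ 1 * (L₁ (lam ^ k * X₀)) ^ 2 * (lam ^ k * X₀) ^ (-ν) := hXμ _ hk
          _ = (L₁ (lam ^ k * X₀)) ^ 2 * (lam ^ k * X₀) ^ (-ν) := by ring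
          _ ≤ (L₁ X₀) ^ 2 * X₀ ^ (-ν) * (4/5) ^ k := (horbit X₀ hX₀X₁ k).2
      have h0 : Tendsto (fun k : ℕ => L₁ (lam ^ k * x) - L₁ (lam ^ k * X₀)) atTop (nhds 0) := by
        apply squeeze_zero_norm' hev
        have := (tendsto_pow_atTop_nhds_zero_of_lt_one (by norm_num : (0:ℝ) ≤ 4/5)
          (by norm_num : (4/5:ℝ) < 1)).const_mul ((L₁ X₀) ^ 2 * X₀ ^ (-ν))
        simpa using this
      have heq : (fun k : ℕ => L₁ (lam ^ k * x)) =
          fun k : ℕ => L₁ (lam ^ k * X₀) + (L₁ (lam ^ k * x) - L₁ (lam ^ k * X₀)) := by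
        funext k; ring
      rw [heq]
      simpa using hC₁lim.add h0
  -- quantitative distance to C₁
  have hquad : ∀ ε : ℝ, 0 < ε → ∃ X : ℝ, X₀ ≤ X ∧
      ∀ x, X ≤ x → |L₁ x - C₁| ≤ 5 * ε * (L₁ x) ^ 2 * x ^ (-ν) := by
    intro ε hε
    obtain ⟨X, hXX₁, hX⟩ := hstep ε hε
    refine ⟨max X X₀, le_max_right _ _, fun x hx => ?_⟩
    have hxX : X ≤ x := le_trans (le_max_left _ _) hx
    have hxX₀ : X₀ ≤ x := le_trans (le_max_right _ _) hx
    have hd := hdiff ε X hε.le hXX₁ hX x hxX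
    have hc := dist_le_of_le_geometric_of_tendsto₀ (4/5) (ε * (L₁ x) ^ 2 * x ^ (-ν))
      (by norm_num) (fun n => by
        rw [Real.dist_eq, abs_sub_comm]; exact hd n) (hlim x hxX₀)
    simp only [pow_zero, one_mul] at hc
    rw [Real.dist_eq] at hc
    calc |L₁ x - C₁| ≤ ε * (L₁ x) ^ 2 * x ^ (-ν) / (1 - 4/5) := hc
      _ = 5 * ε * (L₁ x) ^ 2 * x ^ (-ν) := by ring
  obtain ⟨X₂, hX₂X₀, hquad1⟩ := hquad 1 one_pos
  have hC₁0 : 0 ≤ C₁ := by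
    apply ge_of_tendsto hC₁lim
    filter_upwards with k
    exact (hpos _ (lt_of_lt_of_le hX₀0 (horbge X₀ hX₀0 k))).le
  -- boundedness
  set X₃ : ℝ := max X₂ ((40 * C₁ + 21) ^ (ν⁻¹)) with hX₃_def
  have hX₃X₂ : X₂ ≤ X₃ := le_max_left _ _
  have hX₃0 : (0:ℝ) < X₃ :=
    lt_of_lt_of_le one_pos (le_trans hX₀1 (le_trans hX₂X₀ hX₃X₂))
  have hX₃ν : 40 * C₁ + 21 ≤ X₃ ^ ν := by
    calc 40 * C₁ + 21 = ((40 * C₁ + 21) ^ (ν⁻¹)) ^ ν :=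
          (Real.rpow_inv_rpow (by linarith) hν.ne').symm
      _ ≤ X₃ ^ ν := Real.rpow_le_rpow (Real.rpow_nonneg (by linarith) _)
          (le_max_right _ _) hν.le
  have hlarge : ∀ y, X₃ ≤ y → 2 * C₁ + 1 < L₁ y → y ^ ν ≤ 10 * L₁ y := by
    intro y hy hLy
    have hy0 : (0:ℝ) < y := lt_of_lt_of_le hX₃0 hy
    have hq := hquad1 y (le_trans hX₃X₂ hy)
    have hLy0 : 0 < L₁ y := hpos y hy0
    have hyν : 0 < y ^ ν := Real.rpow_pos_of_pos hy0 ν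
    rw [Real.rpow_neg hy0.le] at hq
    have h1 : L₁ y / 2 ≤ |L₁ y - C₁| := by
      rw [abs_of_pos (by linarith)]; linarith
    have h2 : L₁ y / 2 ≤ 5 * 1 * L₁ y ^ 2 * (y ^ ν)⁻¹ := le_trans h1 hq
    have h3 := mul_le_mul_of_nonneg_right h2 hyν.le
    rw [mul_assoc (5 * 1 * L₁ y ^ 2), inv_mul_cancel₀ hyν.ne'] at h3
    nlinarith
  have hbdd : ∀ x, X₃ ≤ x → L₁ x ≤ 2 * C₁ + 1 := by
    intro x hx
    by_contra hcon
    push_neg at hcon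
    have hx0 : (0:ℝ) < x := lt_of_lt_of_le hX₃0 hx
    have hind : ∀ k : ℕ, 2 * C₁ + 1 < L₁ (lam ^ k * x) := by
      intro k
      induction k with
      | zero => simpa using hcon
      | succ k ih =>
        have hyX₃ : X₃ ≤ lam ^ k * x := le_trans hx (horbge x hx0 k)
        have h10 := hlarge _ hyX₃ ih
        have hXν : X₃ ^ ν ≤ (lam ^ k * x) ^ ν :=
          Real.rpow_le_rpow hX₃0.le hyX₃ hν.le
        have hlb := (hratio (lam ^ k * x)
          (le_trans hX₀X₁ (le_trans hX₂X₀ (le_trans hX₃X₂ hyX₃)))).2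
        have h2 : lam ^ (k+1) * x = lam * (lam ^ k * x) := by ring
        rw [h2]
        linarith
    have hev := (hlim x (le_trans (le_trans hX₂X₀ hX₃X₂) hx)).eventually_lt_const
      (show C₁ < 2 * C₁ + 1 by linarith)
    obtain ⟨k, hk⟩ := hev.exists
    exact absurd (hind k) (not_lt.mpr hk.le)
  -- C₁ positive
  have hC₁pos : 0 < C₁ := by
    set x : ℝ := max X₃ ((20 * (2 * C₁ + 1) + 1) ^ (ν⁻¹)) with hx_def
    have hxX₃ : X₃ ≤ x := le_max_left _ _
    have hx0 : (0:ℝ) < x := lt_of_lt_of_le hX₃0 hxX₃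
    have hxν : 20 * (2 * C₁ + 1) + 1 ≤ x ^ ν := by
      calc 20 * (2 * C₁ + 1) + 1 = ((20 * (2 * C₁ + 1) + 1) ^ (ν⁻¹)) ^ ν :=
            (Real.rpow_inv_rpow (by linarith) hν.ne').symm
        _ ≤ x ^ ν := Real.rpow_le_rpow (Real.rpow_nonneg (by linarith) _)
            (le_max_right _ _) hν.le
    have hL : 0 < L₁ x := hpos x hx0
    have hLb := hbdd x hxX₃
    have hq := hquad1 x (le_trans hX₃X₂ hxX₃)
    have hyν : 0 < x ^ ν := Real.rpow_pos_of_pos hx0 ν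
    rw [Real.rpow_neg hx0.le] at hq
    have h1 : L₁ x - C₁ ≤ 5 * 1 * L₁ x ^ 2 * (x ^ ν)⁻¹ := le_trans (le_abs_self _) hq
    have h2 := mul_le_mul_of_nonneg_right h1 hyν.le
    rw [mul_assoc (5 * 1 * L₁ x ^ 2), inv_mul_cancel₀ hyν.ne'] at h2
    -- (L₁ x - C₁) * x^ν ≤ 5 L₁x²; x^ν ≥ 20(2C₁+1)+1 ≥ 20 L₁x + 1
    nlinarith [mul_le_mul_of_nonneg_left hxν hL.le]
  refine ⟨C₁, hC₁pos, ?_⟩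
  rw [isLittleO_iff]
  intro c hc
  have hM : (0:ℝ) < 2 * C₁ + 1 := by linarith
  have hε : 0 < c / (5 * (2 * C₁ + 1) ^ 2) := by positivity
  obtain ⟨X, hXX₀, hX⟩ := hquad _ hε
  rw [eventually_atTop]
  refine ⟨max X X₃, fun x hx => ?_⟩
  have hxX : X ≤ x := le_trans (le_max_left _ _) hx
  have hxX₃ : X₃ ≤ x := le_trans (le_max_right _ _) hx
  have hx0 : (0:ℝ) < x := lt_of_lt_of_le hX₃0 hxX₃
  have hL : 0 < L₁ x := hpos x hx0
  have hLb := hbdd x hxX₃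
  have hq := hX x hxX
  have hxν : (0:ℝ) < x ^ (-ν) := Real.rpow_pos_of_pos hx0 _
  rw [Real.norm_eq_abs, Real.norm_eq_abs, abs_of_pos hxν]
  calc |L₁ x - C₁| ≤ 5 * (c / (5 * (2 * C₁ + 1) ^ 2)) * (L₁ x) ^ 2 * x ^ (-ν) := hq
    _ ≤ c * x ^ (-ν) := by
        apply mul_le_mul_of_nonneg_right _ hxν.le
        rw [div_eq_mul_inv]
        have hsq : (L₁ x) ^ 2 ≤ (2 * C₁ + 1) ^ 2 := by nlinarith
        have hMinv : 0 < ((5:ℝ) * (2 * C₁ + 1) ^ 2)⁻¹ := by positivity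
        calc 5 * (c * (5 * (2 * C₁ + 1) ^ 2)⁻¹) * (L₁ x) ^ 2
            ≤ 5 * (c * (5 * (2 * C₁ + 1) ^ 2)⁻¹) * (2 * C₁ + 1) ^ 2 := by
              apply mul_le_mul_of_nonneg_left hsq (by positivity)
          _ = c := by field_simp
end
end

section
/- Let Y^(∞) = T⁽¹⁾ + ⋯ + T^(η) be a random sum of η i.i.d. copies of the total progeny T of a critical Galton-Watson process (independent of η). Then its generating function equals g(h(x)), where g is the generating function of η and h of T, and as x ↑ 1, 1 - g(h(x)) ~ (1-x)^{δ/(1+ν)} (L₃((1-x)^{-1}))^δ L₂((1-x)^{-1/(1+ν)} L₃((1-x)^{-1})^{-1}). -/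
open MeasureTheory Filter Asymptotics Set Real ProbabilityTheory

noncomputable section

def genFun {Ω : Type*} [MeasurableSpace Ω] (μ : Measure Ω) (X : Ω → ℕ) (x : ℝ) : ℝ :=
  ∑' n : ℕ, (μ {ω | X ω = n}).toReal * x ^ n

/-!
Conditioning on `η`, independence gives `E[t ^ Y] = ∑ₙ P(η = n) E[t ^ T]ⁿ`, so the generating
function of `Y` is `g ∘ h`.

For the asymptotics write `1 - g (1 - a) = a ^ δ L₂ (1 / a)` and
`B x = (1 - x) ^ (1 / (1 + ν)) L₃ (1 / (1 - x))`. Since `1 - h ~ B` and both tend to `0`, it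
suffices that `L₂ (1 / a) / L₂ (1 / b) → 1` whenever `a ~ b → 0⁺`. Pointwise slow variation does
not give this uniformity, but `L₂ y / y ^ δ = 1 - g (1 - 1 / y)` is antitone because `g` is a
generating function, and this monotonicity squeezes `L₂ v` between `L₂ (r u)` and `L₂ (r⁻¹ u)`
whenever `v / u` is close to `1`. Expanding `B ^ δ L₂ (1 / B)` gives the claimed right-hand side.
-/

open scoped ENNReal Topology

lemma tendsto_one_sub_nhdsLT_one : Tendsto (fun x : ℝ => 1 - x) (𝓝[<] 1) (𝓝[>] 0) := by
  refine tendsto_nhdsWithin_iff.2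
    ⟨?_, eventually_nhdsWithin_of_forall fun _ hx => sub_pos.2 (mem_Iio.1 hx)⟩
  have h : Tendsto (fun x : ℝ => 1 - x) (𝓝 1) (𝓝 (1 - 1)) := tendsto_const_nhds.sub tendsto_id
  exact (sub_self (1 : ℝ) ▸ h).mono_left nhdsWithin_le_nhds

namespace Asymptotics.IsEquivalent

variable {ι : Type*} {l : Filter ι} {a b : ι → ℝ}

lemma eventually_ne_zero (hab : a ~[l] b) (hb : ∀ᶠ x in l, b x ≠ 0) : ∀ᶠ x in l, a x ≠ 0 := by
  filter_upwards [((isEquivalent_iff_tendsto_one hb).1 hab).eventually_ne one_ne_zero] with x hx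
  exact left_ne_zero_of_mul (by simpa [div_eq_mul_inv] using hx)

lemma tendsto_nhdsGT_zero (hab : a ~[l] b) (ha : Tendsto a l (𝓝[>] 0)) :
    Tendsto b l (𝓝[>] 0) :=
  tendsto_nhdsWithin_iff.2 ⟨hab.tendsto_nhds (tendsto_nhdsWithin_iff.1 ha).1,
    hab.symm.eventually_pos (tendsto_nhdsWithin_iff.1 ha).2⟩

end Asymptotics.IsEquivalent

section AntitoneDivRpow

variable {L : ℝ → ℝ} {δ Y₀ : ℝ}

lemma le_mul_div_rpow_of_antitoneOn (hanti : AntitoneOn (fun y => L y / y ^ δ) (Ici Y₀))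
    {y z : ℝ} (hy : Y₀ ≤ y) (hy0 : 0 < y) (hyz : y ≤ z) : L z ≤ L y * (z / y) ^ δ := by
  have hz0 : 0 < z ^ δ := rpow_pos_of_pos (hy0.trans_le hyz) δ
  have key : L z / z ^ δ ≤ L y / y ^ δ := hanti hy (hy.trans hyz) hyz
  rw [div_rpow (hy0.trans_le hyz).le hy0.le]
  calc L z = L z / z ^ δ * z ^ δ := by field_simp
    _ ≤ L y / y ^ δ * z ^ δ := by gcongr
    _ = L y * (z ^ δ / y ^ δ) := by ring

lemma mul_div_rpow_le_of_antitoneOn (hanti : AntitoneOn (fun y => L y / y ^ δ) (Ici Y₀))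
    {y z : ℝ} (hy : Y₀ ≤ y) (hy0 : 0 < y) (hyz : y ≤ z) : L z * (y / z) ^ δ ≤ L y := by
  have hy0' : 0 < y ^ δ := rpow_pos_of_pos hy0 δ
  have key : L z / z ^ δ ≤ L y / y ^ δ := hanti hy (hy.trans hyz) hyz
  rw [div_rpow hy0.le (hy0.trans_le hyz).le]
  calc L z * (y ^ δ / z ^ δ) = L z / z ^ δ * y ^ δ := by ring
    _ ≤ L y / y ^ δ * y ^ δ := by gcongr
    _ = L y := by field_simp

end AntitoneDivRpow

namespace SlowlyVarying

variable {L : ℝ → ℝ} {δ Y₀ : ℝ}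

theorem eventually_ne_zero (hL : SlowlyVarying L) : ∀ᶠ y in atTop, L y ≠ 0 := by
  have h := hL 1 one_pos
  simp only [one_mul] at h
  filter_upwards [h.eventually_ne one_ne_zero] with y hy h0
  simp [h0] at hy

lemma eventually_rpow_mul_ne_zero (hL : SlowlyVarying L) (α : ℝ) :
    ∀ᶠ x in 𝓝[<] 1, (1 - x) ^ α * L (1 / (1 - x)) ≠ 0 := by
  filter_upwards [(tendsto_inv_nhdsGT_zero.comp tendsto_one_sub_nhdsLT_one).eventually
    hL.eventually_ne_zero, tendsto_one_sub_nhdsLT_one.eventually self_mem_nhdsWithin] with x hL hx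
  exact mul_ne_zero (rpow_pos_of_pos hx _).ne' (by simpa [one_div] using hL)

variable {ι : Type*} {l : Filter ι} {u v : ι → ℝ}

lemma tendsto_div_mul_rpow (hL : SlowlyVarying L) {r : ℝ} (hr : 0 < r)
    (hu : Tendsto u l atTop) (huv : Tendsto (fun x => v x / u x) l (𝓝 1)) :
    Tendsto (fun x => L (r * u x) / L (u x) * (v x / (r * u x)) ^ δ) l (𝓝 (r⁻¹ ^ δ)) := by
  have hquot : Tendsto (fun x => v x / (r * u x)) l (𝓝 r⁻¹) := by
    refine (one_div r ▸ huv.div_const r).congr fun x => ?_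
    rw [div_div, mul_comm]
  simpa using ((hL r hr).comp hu).mul (hquot.rpow_const (Or.inl (inv_ne_zero hr.ne')))

/- For `r > 1` the monotonicity of `L y / y ^ δ` bounds `L (v x) / L (u x)` from below by
`L (r u) / L u * (v / (r u)) ^ δ → r⁻¹ ^ δ`; for `r < 1` the same expression is an upper bound.
Then let `r → 1`. -/
theorem tendsto_div_comp_of_antitoneOn (hL : SlowlyVarying L) (hpos : ∀ᶠ y in atTop, 0 < L y)
    (hanti : AntitoneOn (fun y => L y / y ^ δ) (Ici Y₀)) (hu : Tendsto u l atTop)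
    (huv : Tendsto (fun x => v x / u x) l (𝓝 1)) :
    Tendsto (fun x => L (v x) / L (u x)) l (𝓝 1) := by
  have hv : Tendsto v l atTop := by
    refine (huv.pos_mul_atTop one_pos hu).congr' ?_
    filter_upwards [hu.eventually_gt_atTop 0] with x hx
    field_simp
  obtain ⟨Y, hY⟩ := eventually_atTop.1 (hpos.and (eventually_ge_atTop (max Y₀ 1)))
  have hY₀ : ∀ y, Y ≤ y → Y₀ ≤ y := fun y hy => (le_max_left _ _).trans (hY y hy).2
  have hY0 : ∀ y, Y ≤ y → 0 < y := fun y hy =>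
    one_pos.trans_le ((le_max_right _ _).trans (hY y hy).2)
  have hlim : Tendsto (fun r : ℝ => r⁻¹ ^ δ) (𝓝 1) (𝓝 1) := by
    simpa using
      (tendsto_inv₀ one_ne_zero).rpow_const (Or.inl (inv_ne_zero one_ne_zero)) (p := δ)
  refine tendsto_order.2 ⟨fun c hc => ?_, fun c hc => ?_⟩
  · obtain ⟨r, hcr, hr⟩ :=
      ((hlim.mono_left nhdsWithin_le_nhds).eventually_const_lt hc |>.and
        self_mem_nhdsWithin).exists (f := 𝓝[>] (1 : ℝ))
    have hr0 : (0 : ℝ) < r := one_pos.trans hr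
    filter_upwards [(tendsto_div_mul_rpow hL hr0 hu huv).eventually_const_lt hcr,
      huv.eventually_lt_const hr, hu.eventually_ge_atTop Y, hv.eventually_ge_atTop Y]
      with x hF hvu hux hvx
    refine hF.trans_le ?_
    have hvru : v x ≤ r * u x := ((div_lt_iff₀ (hY0 _ hux)).1 hvu).le
    rw [div_mul_eq_mul_div]
    exact div_le_div_of_nonneg_right
      (mul_div_rpow_le_of_antitoneOn hanti (hY₀ _ hvx) (hY0 _ hvx) hvru) (hY _ hux).1.le
  · obtain ⟨r, hcr, hr⟩ :=
      ((hlim.mono_left nhdsWithin_le_nhds).eventually_lt_const hc |>.and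
        (Ioo_mem_nhdsLT one_pos)).exists (f := 𝓝[<] (1 : ℝ))
    filter_upwards [(tendsto_div_mul_rpow hL hr.1 hu huv).eventually_lt_const hcr,
      huv.eventually_const_lt hr.2, (hu.const_mul_atTop hr.1).eventually_ge_atTop Y,
      hu.eventually_ge_atTop Y] with x hF hvu hrux hux
    refine lt_of_le_of_lt ?_ hF
    have hruv : r * u x ≤ v x := ((lt_div_iff₀ (hY0 _ hux)).1 hvu).le
    rw [div_mul_eq_mul_div]
    exact div_le_div_of_nonneg_right
      (le_mul_div_rpow_of_antitoneOn hanti (hY₀ _ hrux) (hY0 _ hrux) hruv) (hY _ hux).1.le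

theorem isEquivalent_rpow_mul_comp_inv (hL : SlowlyVarying L) (hpos : ∀ᶠ y in atTop, 0 < L y)
    (hanti : AntitoneOn (fun y => L y / y ^ δ) (Ici Y₀)) {a b : ι → ℝ}
    (ha : Tendsto a l (𝓝[>] 0)) (hab : a ~[l] b) :
    (fun x => a x ^ δ * L (a x)⁻¹) ~[l] fun x => b x ^ δ * L (b x)⁻¹ := by
  have hb : Tendsto b l (𝓝[>] 0) := hab.tendsto_nhdsGT_zero ha
  have ha_pos : ∀ᶠ x in l, 0 < a x := ha.eventually self_mem_nhdsWithin
  have hb_pos : ∀ᶠ x in l, 0 < b x := hb.eventually self_mem_nhdsWithin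
  have hLb : ∀ᶠ x in l, 0 < L (b x)⁻¹ := (tendsto_inv_nhdsGT_zero.comp hb).eventually hpos
  have hab' : Tendsto (fun x => a x / b x) l (𝓝 1) :=
    (isEquivalent_iff_tendsto_one (hb_pos.mono fun _ h => h.ne')).1 hab
  have hba' : Tendsto (fun x => (a x)⁻¹ / (b x)⁻¹) l (𝓝 1) := by
    refine ((isEquivalent_iff_tendsto_one (ha_pos.mono fun _ h => h.ne')).1 hab.symm).congr
      fun x => ?_
    rw [Pi.div_apply, inv_div_inv]
  rw [isEquivalent_iff_tendsto_one ((hb_pos.and hLb).mono fun x h =>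
    (mul_pos (rpow_pos_of_pos h.1 δ) h.2).ne')]
  have hlim := (hab'.rpow_const (Or.inl one_ne_zero) (p := δ)).mul
    (hL.tendsto_div_comp_of_antitoneOn hpos hanti (tendsto_inv_nhdsGT_zero.comp hb) hba')
  rw [one_rpow, one_mul] at hlim
  refine hlim.congr' ?_
  filter_upwards [ha_pos, hb_pos] with x hax hbx
  simp only [Pi.div_apply, Function.comp_apply, div_rpow hax.le hbx.le]
  ring

end SlowlyVarying

section GeneratingFunction

variable {Ω : Type*} [MeasurableSpace Ω] {μ : Measure Ω} {X : Ω → ℕ}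

lemma lintegral_pow_eq_tsum (hX : Measurable X) (t : ℝ≥0∞) :
    ∫⁻ ω, t ^ X ω ∂μ = ∑' n, μ {ω | X ω = n} * t ^ n := by
  rw [← lintegral_map Measurable.of_discrete hX, lintegral_countable']
  congr 1 with n
  rw [Measure.map_apply hX (measurableSet_singleton n), mul_comm]
  rfl

lemma genFun_eq_toReal_lintegral [IsFiniteMeasure μ] (hX : Measurable X) {x : ℝ} (hx : 0 ≤ x) :
    genFun μ X x = (∫⁻ ω, ENNReal.ofReal x ^ X ω ∂μ).toReal := by
  rw [lintegral_pow_eq_tsum hX, ENNReal.tsum_toReal_eq fun n =>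
    ENNReal.mul_ne_top (measure_ne_top μ _) (ENNReal.pow_ne_top ENNReal.ofReal_ne_top)]
  simp only [genFun, ENNReal.toReal_mul, ENNReal.toReal_pow, ENNReal.toReal_ofReal hx]

variable [IsProbabilityMeasure μ]

lemma lintegral_ofReal_pow_le_one {x : ℝ} (hx : x ≤ 1) :
    ∫⁻ ω, ENNReal.ofReal x ^ X ω ∂μ ≤ 1 :=
  (lintegral_mono fun ω => pow_le_one₀ zero_le (ENNReal.ofReal_le_one.2 hx)).trans_eq
    (by simp)

lemma ofReal_genFun (hX : Measurable X) {x : ℝ} (hx : x ∈ Icc 0 1) :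
    ENNReal.ofReal (genFun μ X x) = ∫⁻ ω, ENNReal.ofReal x ^ X ω ∂μ := by
  rw [genFun_eq_toReal_lintegral hX hx.1,
    ENNReal.ofReal_toReal ((lintegral_ofReal_pow_le_one hx.2).trans_lt ENNReal.one_lt_top).ne]

omit [IsProbabilityMeasure μ] in
lemma genFun_nonneg {x : ℝ} (hx : 0 ≤ x) : 0 ≤ genFun μ X x :=
  tsum_nonneg fun _ => by positivity

lemma genFun_le_one (hX : Measurable X) {x : ℝ} (hx : x ∈ Icc 0 1) : genFun μ X x ≤ 1 := by
  rw [genFun_eq_toReal_lintegral hX hx.1]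
  exact ENNReal.toReal_le_of_le_ofReal zero_le_one
    ((lintegral_ofReal_pow_le_one hx.2).trans_eq ENNReal.ofReal_one.symm)

lemma monotoneOn_genFun (hX : Measurable X) : MonotoneOn (genFun μ X) (Icc 0 1) := by
  intro x hx y hy hxy
  rw [genFun_eq_toReal_lintegral hX hx.1, genFun_eq_toReal_lintegral hX hy.1]
  exact ENNReal.toReal_mono ((lintegral_ofReal_pow_le_one hy.2).trans_lt ENNReal.one_lt_top).ne
    (lintegral_mono fun ω => pow_le_pow_left' (ENNReal.ofReal_le_ofReal hxy) _)

lemma genFun_lt_one_of_frequently (hX : Measurable X) (h : ∃ᶠ y in 𝓝[<] 1, genFun μ X y ≠ 1)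
    {x : ℝ} (hx : x ∈ Ico 0 1) : genFun μ X x < 1 := by
  obtain ⟨y, hy1, hxy⟩ := (h.and_eventually (Ioo_mem_nhdsLT hx.2)).exists
  have hy : y ∈ Icc (0 : ℝ) 1 := ⟨hx.1.trans hxy.1.le, hxy.2.le⟩
  exact ((monotoneOn_genFun hX) (Ico_subset_Icc_self hx) hy hxy.1.le).trans_lt
    ((genFun_le_one hX hy).lt_of_ne hy1)

lemma tendsto_genFun_nhdsLT_one (hX : Measurable X) :
    Tendsto (genFun μ X) (𝓝[<] 1) (𝓝 1) := by
  have hsum : ∑' n, μ {ω | X ω = n} = 1 := by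
    simpa using (lintegral_pow_eq_tsum (μ := μ) hX 1).symm
  have := ENNReal.hasSum_toReal (hsum.trans_ne ENNReal.one_ne_top)
  rw [← ENNReal.tsum_toReal_eq (fun n => measure_ne_top μ _), hsum, ENNReal.toReal_one] at this
  exact Real.tendsto_tsum_powerSeries_nhdsWithin_lt this.tendsto_sum_nat

lemma tendsto_one_sub_genFun_nhdsGT_zero (hX : Measurable X)
    (hlt : ∀ x ∈ Ico (0:ℝ) 1, genFun μ X x < 1) :
    Tendsto (fun x => 1 - genFun μ X x) (𝓝[<] 1) (𝓝[>] 0) :=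
  tendsto_nhdsWithin_iff.2
    ⟨by simpa using (tendsto_const_nhds (x := (1 : ℝ))).sub (tendsto_genFun_nhdsLT_one hX),
      mem_of_superset (Ioo_mem_nhdsLT zero_lt_one) fun x hx =>
        sub_pos.2 (hlt x (Ioo_subset_Ico_self hx))⟩

end GeneratingFunction

section RandomSum

variable {Ω : Type*} [MeasurableSpace Ω] {μ : Measure Ω} [IsProbabilityMeasure μ]
  {T : ℕ → Ω → ℕ} {η : Ω → ℕ}

lemma lintegral_pow_sum_range (hT : ∀ m, Measurable (T m)) (hind : iIndepFun T μ)
    (hident : ∀ m, μ.map (T m) = μ.map (T 0)) (t : ℝ≥0∞) (n : ℕ) :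
    ∫⁻ ω, t ^ (∑ m ∈ Finset.range n, T m ω) ∂μ = (∫⁻ ω, t ^ T 0 ω ∂μ) ^ n := by
  induction n with
  | zero => simp
  | succ n ih =>
    have hTn : ∫⁻ ω, t ^ T n ω ∂μ = ∫⁻ ω, t ^ T 0 ω ∂μ := by
      rw [← lintegral_map .of_discrete (hT n), hident n, lintegral_map .of_discrete (hT 0)]
    have hSn : Measurable fun ω => ∑ m ∈ Finset.range n, T m ω :=
      Finset.measurable_sum _ fun m _ => hT m
    have hindep : IndepFun (fun ω => ∑ m ∈ Finset.range n, T m ω) (T n) μ := by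
      simpa only [Finset.sum_fn] using
        hind.indepFun_finsetSum_of_notMem hT (Finset.notMem_range_self (n := n))
    have hpow : Measurable fun k : ℕ => t ^ k := .of_discrete
    have hprod := lintegral_mul_eq_lintegral_mul_lintegral_of_indepFun
      (hpow.comp hSn) (hpow.comp (hT n)) (hindep.comp hpow hpow)
    simp_rw [Finset.sum_range_succ, pow_add]
    simp only [Pi.mul_apply, Function.comp_apply] at hprod
    rw [hprod, ih, hTn, pow_one]

lemma measurable_randomSum (hT : ∀ m, Measurable (T m)) (hη : Measurable η) :
    Measurable fun ω => ∑ m ∈ Finset.range (η ω), T m ω :=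
  (measurable_from_prod_countable_right (f := fun p : ℕ × Ω => ∑ m ∈ Finset.range p.1, T m p.2)
    fun n => Finset.measurable_sum (Finset.range n) fun m _ => hT m).comp (hη.prodMk measurable_id)

theorem lintegral_pow_randomSum (hT : ∀ m, Measurable (T m)) (hη : Measurable η)
    (hindep : iIndepFun (fun o : Option ℕ => Option.elim o η fun m => T m) μ)
    (hident : ∀ m, μ.map (T m) = μ.map (T 0)) (t : ℝ≥0∞) :
    ∫⁻ ω, t ^ (∑ m ∈ Finset.range (η ω), T m ω) ∂μ =
      ∫⁻ ω, (∫⁻ ω', t ^ T 0 ω' ∂μ) ^ η ω ∂μ := by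
  have hF : ∀ o, Measurable (Option.elim o η fun m => T m) := by
    rintro (_ | m)
    exacts [hη, hT m]
  have hS n : Measurable fun ω => ∑ m ∈ Finset.range n, T m ω :=
    Finset.measurable_sum _ fun m _ => hT m
  have hSη n : IndepFun (fun ω => ∑ m ∈ Finset.range n, T m ω) η μ := by
    simpa [Finset.sum_map, Finset.sum_fn] using hindep.indepFun_finsetSum_of_notMem hF
      (s := (Finset.range n).map Function.Embedding.some) (i := none) (by simp)
  have hpow : Measurable fun k : ℕ => t ^ k := .of_discrete
  have hindicator n : Measurable fun k : ℕ => ({n} : Set ℕ).indicator (1 : ℕ → ℝ≥0∞) k :=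
    .of_discrete
  have hsplit ω : t ^ (∑ m ∈ Finset.range (η ω), T m ω) =
      ∑' n, ({n} : Set ℕ).indicator 1 (η ω) * t ^ (∑ m ∈ Finset.range n, T m ω) := by
    rw [tsum_eq_single (η ω) fun n hn => by simp [Ne.symm hn]]
    simp
  have hfiber n : ∫⁻ ω, ({n} : Set ℕ).indicator 1 (η ω) * t ^ (∑ m ∈ Finset.range n, T m ω) ∂μ =
      μ {ω | η ω = n} * (∫⁻ ω, t ^ T 0 ω ∂μ) ^ n := by
    have := lintegral_mul_eq_lintegral_mul_lintegral_of_indepFun ((hindicator n).comp hη)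
      (hpow.comp (hS n)) ((hSη n).symm.comp (hindicator n) hpow)
    simp only [Pi.mul_apply, Function.comp_apply] at this
    rw [this, lintegral_pow_sum_range hT (hindep.precomp (g := some) (Option.some_injective ℕ))
      hident]
    congr 1
    exact lintegral_indicator_one (hη (measurableSet_singleton n))
  simp_rw [hsplit]
  rw [lintegral_tsum fun n => by fun_prop, lintegral_pow_eq_tsum hη]
  simp_rw [hfiber]

theorem genFun_randomSum (hT : ∀ m, Measurable (T m)) (hη : Measurable η)
    (hindep : iIndepFun (fun o : Option ℕ => Option.elim o η fun m => T m) μ)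
    (hident : ∀ m, μ.map (T m) = μ.map (T 0)) {x : ℝ} (hx : x ∈ Icc 0 1) :
    genFun μ (fun ω => ∑ m ∈ Finset.range (η ω), T m ω) x = genFun μ η (genFun μ (T 0) x) := by
  rw [genFun_eq_toReal_lintegral (measurable_randomSum hT hη) hx.1,
    genFun_eq_toReal_lintegral hη (genFun_nonneg hx.1), ofReal_genFun (hT 0) hx,
    lintegral_pow_randomSum hT hη hindep hident]

end RandomSum

section OneSubForm

variable {g L : ℝ → ℝ} {δ : ℝ}

lemma one_sub_inv_mem_Ico {y : ℝ} (hy : 1 ≤ y) : 1 - y⁻¹ ∈ Ico (0:ℝ) 1 :=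
  ⟨sub_nonneg.2 (inv_le_one_of_one_le₀ hy), sub_lt_self 1 (inv_pos.2 (one_pos.trans_le hy))⟩

lemma div_rpow_eq_one_sub_apply_one_sub_inv
    (hg : ∀ x ∈ Ico (0:ℝ) 1, g x = 1 - (1 - x) ^ δ * L (1 / (1 - x))) {y : ℝ} (hy : 1 ≤ y) :
    L y / y ^ δ = 1 - g (1 - y⁻¹) := by
  rw [hg _ (one_sub_inv_mem_Ico hy), sub_sub_cancel, sub_sub_cancel, one_div, inv_inv,
    inv_rpow (zero_le_one.trans hy)]
  ring

lemma antitoneOn_div_rpow_of_eq_one_sub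
    (hg : ∀ x ∈ Ico (0:ℝ) 1, g x = 1 - (1 - x) ^ δ * L (1 / (1 - x)))
    (hmono : MonotoneOn g (Ico 0 1)) : AntitoneOn (fun y => L y / y ^ δ) (Ici 1) := by
  intro y hy z hz hyz
  simp only
  rw [div_rpow_eq_one_sub_apply_one_sub_inv hg hy, div_rpow_eq_one_sub_apply_one_sub_inv hg hz,
    sub_le_sub_iff_left]
  exact hmono (one_sub_inv_mem_Ico hy) (one_sub_inv_mem_Ico hz)
    (sub_le_sub_left (inv_anti₀ (one_pos.trans_le hy) hyz) 1)

lemma nonneg_of_eq_one_sub (hg : ∀ x ∈ Ico (0:ℝ) 1, g x = 1 - (1 - x) ^ δ * L (1 / (1 - x)))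
    (hle : ∀ x ∈ Ico (0:ℝ) 1, g x ≤ 1) {y : ℝ} (hy : 1 ≤ y) : 0 ≤ L y := by
  have h : 0 ≤ L y / y ^ δ := div_rpow_eq_one_sub_apply_one_sub_inv hg hy ▸
    sub_nonneg.2 (hle _ (one_sub_inv_mem_Ico hy))
  simpa using (le_div_iff₀ (rpow_pos_of_pos (one_pos.trans_le hy) δ)).1 h

lemma SlowlyVarying.eventually_pos_of_eq_one_sub (hL : SlowlyVarying L)
    (hg : ∀ x ∈ Ico (0:ℝ) 1, g x = 1 - (1 - x) ^ δ * L (1 / (1 - x)))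
    (hle : ∀ x ∈ Ico (0:ℝ) 1, g x ≤ 1) : ∀ᶠ y in atTop, 0 < L y := by
  filter_upwards [hL.eventually_ne_zero, eventually_ge_atTop 1] with y hne hy
  exact (nonneg_of_eq_one_sub hg hle hy).lt_of_ne' hne

end OneSubForm

lemma mul_rpow_mul_apply_inv (L : ℝ → ℝ) {t c : ℝ} (a δ : ℝ) (ht : 0 < t) (hc : 0 < c) :
    (t ^ a * c) ^ δ * L (t ^ a * c)⁻¹ = t ^ (a * δ) * c ^ δ * L (t ^ (-a) * c⁻¹) := by
  rw [mul_rpow (rpow_pos_of_pos ht a).le hc.le, ← rpow_mul ht.le, mul_inv, rpow_neg ht.le]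

theorem stmt12_general {Ω : Type*} [MeasurableSpace Ω] (μ : Measure Ω) [IsProbabilityMeasure μ]
    (ν δ : ℝ)
    (L₂ L₃ : ℝ → ℝ) (hL₂ : SlowlyVarying L₂) (hL₃ : SlowlyVarying L₃)
    (T : ℕ → Ω → ℕ) (η : Ω → ℕ) (hmeasT : ∀ m, Measurable (T m)) (hmeasη : Measurable η)
    (hindep : iIndepFun
        (fun o : Option ℕ => Option.elim o η fun m => T m) μ)
    (hidentT : ∀ m, Measure.map (T m) μ = Measure.map (T 0) μ)
    (g h : ℝ → ℝ)
    (hg : ∀ x ∈ Ico (0:ℝ) 1, g x = 1 - (1 - x) ^ δ * L₂ (1 / (1 - x)))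
    (hggen : ∀ x ∈ Ico (0:ℝ) 1, genFun μ η x = g x)
    (hhgen : ∀ x ∈ Ico (0:ℝ) 1, genFun μ (T 0) x = h x)
    (hh : (fun x => 1 - h x) ~[nhdsWithin 1 (Set.Iio 1)]
        fun x => (1 - x) ^ (1 / (1 + ν)) * L₃ (1 / (1 - x)))
    (Y : Ω → ℕ) (hY : ∀ ω, Y ω = ∑ m ∈ Finset.range (η ω), T m ω) :
    (∀ x ∈ Ico (0:ℝ) 1, genFun μ Y x = g (h x)) ∧
    (fun x => 1 - g (h x)) ~[nhdsWithin 1 (Set.Iio 1)]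
      fun x => (1 - x) ^ (δ / (1 + ν)) * (L₃ (1 / (1 - x))) ^ δ
        * L₂ ((1 - x) ^ (-(1 / (1 + ν))) * (L₃ (1 / (1 - x)))⁻¹) := by
  have hIco : ∀ᶠ x in 𝓝[<] (1 : ℝ), x ∈ Ico 0 1 :=
    mem_of_superset (Ioo_mem_nhdsLT zero_lt_one) Ioo_subset_Ico_self
  have hT_lt : ∀ x ∈ Ico (0:ℝ) 1, genFun μ (T 0) x < 1 := by
    refine fun x => genFun_lt_one_of_frequently (hmeasT 0) (Eventually.frequently ?_)
    filter_upwards [hh.eventually_ne_zero (hL₃.eventually_rpow_mul_ne_zero _), hIco] with y hy hy01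
    rwa [hhgen y hy01, ne_comm, ← sub_ne_zero]
  have hh_mem : ∀ x ∈ Ico (0:ℝ) 1, h x ∈ Ico (0:ℝ) 1 := fun x hx =>
    hhgen x hx ▸ ⟨genFun_nonneg hx.1, hT_lt x hx⟩
  have h1h : Tendsto (fun x => 1 - h x) (𝓝[<] 1) (𝓝[>] 0) :=
    (tendsto_one_sub_genFun_nhdsGT_zero (hmeasT 0) hT_lt).congr'
      (hIco.mono fun x hx => by rw [hhgen x hx])
  have hmono_g : MonotoneOn g (Ico 0 1) :=
    ((monotoneOn_genFun hmeasη).mono Ico_subset_Icc_self).congr hggen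
  have hL₂pos := hL₂.eventually_pos_of_eq_one_sub hg fun x hx =>
    hggen x hx ▸ genFun_le_one hmeasη (Ico_subset_Icc_self hx)
  refine ⟨fun x hx => ?_, ((hL₂.isEquivalent_rpow_mul_comp_inv hL₂pos
    (antitoneOn_div_rpow_of_eq_one_sub hg hmono_g) h1h hh).congr_left ?_).congr_right ?_⟩
  · rw [show Y = _ from funext hY, genFun_randomSum hmeasT hmeasη hindep hidentT
      (Ico_subset_Icc_self hx), hhgen x hx, hggen _ (hh_mem x hx)]
  · filter_upwards [hIco] with x hx
    rw [hg _ (hh_mem x hx), one_div]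
    ring
  · filter_upwards [(hh.tendsto_nhdsGT_zero h1h).eventually self_mem_nhdsWithin,
      tendsto_one_sub_nhdsLT_one.eventually self_mem_nhdsWithin] with x hB hx
    rw [mul_rpow_mul_apply_inv L₂ _ δ hx ((pos_iff_pos_of_mul_pos hB).1 (rpow_pos_of_pos hx _)),
      one_div_mul_eq_div]

theorem stmt12 {Ω : Type*} [MeasurableSpace Ω] (μ : Measure Ω) [IsProbabilityMeasure μ]
    (ν δ : ℝ) (hν0 : 0 ≤ ν) (hν1 : ν < 1) (hδ0 : 0 < δ) (hδ1 : δ < 1)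
    (L₂ L₃ : ℝ → ℝ) (hL₂ : SlowlyVarying L₂) (hL₃ : SlowlyVarying L₃)
    (T : ℕ → Ω → ℕ) (η : Ω → ℕ) (hmeasT : ∀ m, Measurable (T m)) (hmeasη : Measurable η)
    (hindep : iIndepFun
        (fun o : Option ℕ => Option.elim o η fun m => T m) μ)
    (hidentT : ∀ m, Measure.map (T m) μ = Measure.map (T 0) μ)
    (g h : ℝ → ℝ)
    (hg : ∀ x ∈ Ico (0:ℝ) 1, g x = 1 - (1 - x) ^ δ * L₂ (1 / (1 - x)))
    (hggen : ∀ x ∈ Ico (0:ℝ) 1, genFun μ η x = g x)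
    (hhgen : ∀ x ∈ Ico (0:ℝ) 1, genFun μ (T 0) x = h x)
    (hh : (fun x => 1 - h x) ~[nhdsWithin 1 (Set.Iio 1)]
        fun x => (1 - x) ^ (1 / (1 + ν)) * L₃ (1 / (1 - x)))
    (Y : Ω → ℕ) (hY : ∀ ω, Y ω = ∑ m ∈ Finset.range (η ω), T m ω) :
    (∀ x ∈ Ico (0:ℝ) 1, genFun μ Y x = g (h x)) ∧
    (fun x => 1 - g (h x)) ~[nhdsWithin 1 (Set.Iio 1)]
      fun x => (1 - x) ^ (δ / (1 + ν)) * (L₃ (1 / (1 - x))) ^ δ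
        * L₂ ((1 - x) ^ (-(1 / (1 + ν))) * (L₃ (1 / (1 - x)))⁻¹) :=
  stmt12_general μ ν δ L₂ L₃ hL₂ hL₃ T η hmeasT hmeasη hindep hidentT g h hg hggen hhgen hh Y hY
end
end
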